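/- Fix γ ∈ [0,1); assume every induced kernel P_{π¹,π²} is γ-contractive with stationary distribution d_{π¹,π²}, and let I₂ ≥ 0 satisfy ‖P_{π¹,π²} − P_{π¹,π²'}‖_∞ ≤ I₂·‖π² − π²'‖_∞ for all policies. Define the average reward η(π¹,π²) = ∑_s d_{π¹,π²}(s) · g_{π¹,π²}(s), where g_{π¹,π²}(s) = ∑_{a¹,a²} π¹(s,a¹)π²(s,a²)r(s,a¹,a²). Then for all policies π¹, π¹', π², π²': |η(π¹,π²) − η(π¹',π²')| ≤ (‖π¹ − π¹'‖_∞ + I₂·‖π² − π²'‖_∞)/(1 − γ) + ‖π¹ − π¹'‖_∞ + ‖π² − π²'‖_∞. -/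

import Mathlib

/-!
Write η(π) − η(π') = ∑ₛ (d − d')(s) g(s) + ∑ₛ d'(s) (g − g')(s). Since g is bilinear in the two
policies with rewards in [0, 1], the second sum is at most ‖π¹ − π¹'‖ + ‖π² − π²'‖ and the first
at most ‖d − d'‖₁. The stationarity relations d = d ⬝ K and d' = d' ⬝ K' together with the
γ-contraction of K give ‖d − d'‖₁ ≤ γ ‖d − d'‖₁ + ‖K − K'‖_∞, and changing one policy at a time
gives ‖K − K'‖_∞ ≤ ‖π¹ − π¹'‖ + I₂ ‖π² − π²'‖.
-/

/-- A probability vector on a finite type: nonnegative entries summing to 1. -/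
def IsProbVec {S : Type*} [Fintype S] (d : S → ℝ) : Prop :=
  (∀ s, 0 ≤ d s) ∧ ∑ s, d s = 1

/-- A policy: each row is a probability vector over actions. -/
def IsPolicy {S A : Type*} [Fintype A] (π : S → A → ℝ) : Prop :=
  ∀ s, (∀ a, 0 ≤ π s a) ∧ ∑ a, π s a = 1

/-- Maximum of a real-valued function over a nonempty finite type. -/
noncomputable def fmax {S : Type*} [Fintype S] [Nonempty S] (f : S → ℝ) : ℝ :=
  Finset.univ.sup' Finset.univ_nonempty f

/-- Policy distance ‖π − π'‖_∞ = max_s ∑_a |π(s,a) − π'(s,a)|. -/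
noncomputable def pdist {S A : Type*} [Fintype S] [Nonempty S] [Fintype A]
    (π π' : S → A → ℝ) : ℝ :=
  fmax (fun s => ∑ a, |π s a - π' s a|)

/-- Kernel distance ‖K − K'‖_∞ = max_s ∑_{s'} |K(s,s') − K'(s,s')|. -/
noncomputable def kdist {S : Type*} [Fintype S] [Nonempty S] (K K' : S → S → ℝ) : ℝ :=
  fmax (fun s => ∑ s', |K s s' - K' s s'|)

/-- The induced kernel P_{π₁,π₂}(s,s') = ∑_{a₁,a₂} π₁(s,a₁)·π₂(s,a₂)·P(s,a₁,a₂,s'). -/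
def kernel {S A₁ A₂ : Type*} [Fintype A₁] [Fintype A₂]
    (P : S → A₁ → A₂ → S → ℝ) (π₁ : S → A₁ → ℝ) (π₂ : S → A₂ → ℝ) : S → S → ℝ :=
  fun s s' => ∑ a₁, ∑ a₂, π₁ s a₁ * π₂ s a₂ * P s a₁ a₂ s'

/-- Row-vector–matrix multiplication: (d ⬝ K) s' = ∑ s, d s · K s s'. -/
def vmul {S : Type*} [Fintype S] (d : S → ℝ) (K : S → S → ℝ) : S → ℝ :=
  fun s' => ∑ s, d s * K s s'

/-- L1 norm of a vector: ‖x‖₁ = ∑ s, |x s|. -/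
def l1 {S : Type*} [Fintype S] (x : S → ℝ) : ℝ := ∑ s, |x s|

/-- γ-contractivity. -/
def Contractive {S : Type*} [Fintype S] (γ : ℝ) (K : S → S → ℝ) : Prop :=
  ∀ d d' : S → ℝ, IsProbVec d → IsProbVec d' →
    l1 (fun s => vmul d K s - vmul d' K s) ≤ γ * l1 (fun s => d s - d' s)

/-- Expected one-step reward g_{π₁,π₂}(s) = ∑_{a₁,a₂} π₁(s,a₁)π₂(s,a₂)r(s,a₁,a₂). -/
def gfun {S A₁ A₂ : Type*} [Fintype A₁] [Fintype A₂]
    (r : S → A₁ → A₂ → ℝ) (π₁ : S → A₁ → ℝ) (π₂ : S → A₂ → ℝ) : S → ℝ :=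
  fun s => ∑ a₁, ∑ a₂, π₁ s a₁ * π₂ s a₂ * r s a₁ a₂

/-- Average reward η(π₁,π₂) = ∑_s d_{π₁,π₂}(s)·g_{π₁,π₂}(s). -/
def eta {S A₁ A₂ : Type*} [Fintype S] [Fintype A₁] [Fintype A₂]
    (r : S → A₁ → A₂ → ℝ) (dstat : (S → A₁ → ℝ) → (S → A₂ → ℝ) → S → ℝ)
    (π₁ : S → A₁ → ℝ) (π₂ : S → A₂ → ℝ) : ℝ :=
  ∑ s, dstat π₁ π₂ s * gfun r π₁ π₂ s

open Finset

section Sums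

variable {ι κ : Type*} [Fintype ι] [Fintype κ]

theorem abs_sum_mul_le (w f : ι → ℝ) {C : ℝ} (hf : ∀ i, |f i| ≤ C) :
    |∑ i, w i * f i| ≤ (∑ i, |w i|) * C := by
  rw [sum_mul]
  refine (abs_sum_le_sum_abs _ _).trans (sum_le_sum fun i _ => ?_)
  rw [abs_mul]
  exact mul_le_mul_of_nonneg_left (hf i) (abs_nonneg _)

theorem sum_abs_sum_mul_le (w : ι → ℝ) (M : ι → κ → ℝ) {C : ℝ}
    (hM : ∀ i, ∑ j, |M i j| ≤ C) :
    ∑ j, |∑ i, w i * M i j| ≤ (∑ i, |w i|) * C :=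
  calc ∑ j, |∑ i, w i * M i j|
      ≤ ∑ j, ∑ i, |w i| * |M i j| :=
        sum_le_sum fun j _ => (abs_sum_le_sum_abs _ _).trans_eq (by simp only [abs_mul])
    _ = ∑ i, |w i| * ∑ j, |M i j| := by rw [sum_comm]; simp only [mul_sum]
    _ ≤ ∑ i, |w i| * C := sum_le_sum fun i _ => mul_le_mul_of_nonneg_left (hM i) (abs_nonneg _)
    _ = (∑ i, |w i|) * C := (sum_mul _ _ _).symm

theorem IsProbVec.sum_abs {d : ι → ℝ} (hd : IsProbVec d) : ∑ i, |d i| = 1 := by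
  rw [← hd.2]
  exact sum_congr rfl fun i _ => abs_of_nonneg (hd.1 i)

theorem IsProbVec.abs_sum_mul_le {w : ι → ℝ} (hw : IsProbVec w) {f : ι → ℝ} {C : ℝ}
    (hf : ∀ i, |f i| ≤ C) : |∑ i, w i * f i| ≤ C := by
  simpa only [hw.sum_abs, one_mul] using _root_.abs_sum_mul_le w f hf

theorem IsProbVec.mixture {w : ι → ℝ} (hw : IsProbVec w) {Q : ι → κ → ℝ}
    (hQ : ∀ i, IsProbVec (Q i)) : IsProbVec (fun j => ∑ i, w i * Q i j) := by
  refine ⟨fun j => sum_nonneg fun i _ => mul_nonneg (hw.1 i) ((hQ i).1 j), ?_⟩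
  rw [sum_comm]
  simp only [← mul_sum, (hQ _).2, mul_one, hw.2]

theorem l1_sub_le_add {S : Type*} [Fintype S] (f g h : S → ℝ) :
    l1 (fun s => f s - h s) ≤ l1 (fun s => f s - g s) + l1 (fun s => g s - h s) := by
  simp only [l1, ← sum_add_distrib]
  exact sum_le_sum fun s _ => abs_sub_le _ _ _

end Sums

theorem IsPolicy.isProbVec {S A : Type*} [Fintype A] {π : S → A → ℝ} (hπ : IsPolicy π)
    (s : S) : IsProbVec (π s) :=
  hπ s

section Distances

variable {S : Type*} [Fintype S] [Nonempty S]

theorem le_fmax (f : S → ℝ) (s : S) : f s ≤ fmax f :=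
  le_sup' f (mem_univ s)

theorem fmax_le {f : S → ℝ} {C : ℝ} (h : ∀ s, f s ≤ C) : fmax f ≤ C :=
  sup'_le _ _ fun s _ => h s

theorem sum_abs_sub_le_pdist {A : Type*} [Fintype A] (π π' : S → A → ℝ) (s : S) :
    ∑ a, |π s a - π' s a| ≤ pdist π π' :=
  le_fmax (fun s => ∑ a, |π s a - π' s a|) s

theorem sum_abs_sub_le_kdist (K K' : S → S → ℝ) (s : S) :
    ∑ s', |K s s' - K' s s'| ≤ kdist K K' :=
  le_fmax (fun s => ∑ s', |K s s' - K' s s'|) s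

theorem kdist_triangle (K K' K'' : S → S → ℝ) :
    kdist K K'' ≤ kdist K K' + kdist K' K'' :=
  fmax_le fun s =>
    calc ∑ s', |K s s' - K'' s s'|
        ≤ ∑ s', |K s s' - K' s s'| + ∑ s', |K' s s' - K'' s s'| := by
          rw [← sum_add_distrib]
          exact sum_le_sum fun s' _ => abs_sub_le _ _ _
      _ ≤ kdist K K' + kdist K' K'' :=
          add_le_add (sum_abs_sub_le_kdist _ _ s) (sum_abs_sub_le_kdist _ _ s)

theorem l1_vmul_sub_vmul_le_kdist {d : S → ℝ} (hd : IsProbVec d) (K K' : S → S → ℝ) :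
    l1 (fun s => vmul d K s - vmul d K' s) ≤ kdist K K' := by
  simpa only [l1, vmul, ← sum_sub_distrib, ← mul_sub, hd.sum_abs, one_mul]
    using sum_abs_sum_mul_le d (fun s s' => K s s' - K' s s') (sum_abs_sub_le_kdist K K')

theorem Contractive.l1_sub_le_of_stationary {γ : ℝ} (hγ : γ < 1) {K K' : S → S → ℝ}
    (hK : Contractive γ K) {d d' : S → ℝ} (hd : IsProbVec d) (hd' : IsProbVec d')
    (hdK : vmul d K = d) (hd'K' : vmul d' K' = d') :
    l1 (fun s => d s - d' s) ≤ kdist K K' / (1 - γ) := by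
  have hstep : l1 (fun s => d s - d' s) ≤ γ * l1 (fun s => d s - d' s) + kdist K K' :=
    calc l1 (fun s => d s - d' s) = l1 (fun s => vmul d K s - vmul d' K' s) := by
          rw [hdK, hd'K']
      _ ≤ l1 (fun s => vmul d K s - vmul d' K s) + l1 (fun s => vmul d' K s - vmul d' K' s) :=
          l1_sub_le_add _ _ _
      _ ≤ γ * l1 (fun s => d s - d' s) + kdist K K' :=
          add_le_add (hK d d' hd hd') (l1_vmul_sub_vmul_le_kdist hd' K K')
  rw [le_div_iff₀ (by linarith)]
  linarith

end Distances

section Rewards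

variable {S A₁ A₂ : Type*} [Fintype A₁] [Fintype A₂]

theorem gfun_eq_sum_mul_sum (r : S → A₁ → A₂ → ℝ) (π₁ : S → A₁ → ℝ) (π₂ : S → A₂ → ℝ)
    (s : S) : gfun r π₁ π₂ s = ∑ a₁, π₁ s a₁ * ∑ a₂, π₂ s a₂ * r s a₁ a₂ := by
  simp only [gfun, mul_sum, mul_assoc]

theorem gfun_sub_gfun_left (r : S → A₁ → A₂ → ℝ) (π₁ π₁' : S → A₁ → ℝ) (π₂ : S → A₂ → ℝ)
    (s : S) : gfun r π₁ π₂ s - gfun r π₁' π₂ s =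
      ∑ a₁, (π₁ s a₁ - π₁' s a₁) * ∑ a₂, π₂ s a₂ * r s a₁ a₂ := by
  simp only [gfun_eq_sum_mul_sum, ← sum_sub_distrib, sub_mul]

theorem gfun_sub_gfun_right (r : S → A₁ → A₂ → ℝ) (π₁ : S → A₁ → ℝ) (π₂ π₂' : S → A₂ → ℝ)
    (s : S) : gfun r π₁ π₂ s - gfun r π₁ π₂' s =
      ∑ a₁, π₁ s a₁ * ∑ a₂, (π₂ s a₂ - π₂' s a₂) * r s a₁ a₂ := by
  simp only [gfun_eq_sum_mul_sum, ← sum_sub_distrib, ← mul_sub, sub_mul]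

variable {r : S → A₁ → A₂ → ℝ} (hr : ∀ s a₁ a₂, |r s a₁ a₂| ≤ 1)
include hr

theorem abs_gfun_le {π₁ : S → A₁ → ℝ} {π₂ : S → A₂ → ℝ} (hπ₁ : IsPolicy π₁)
    (hπ₂ : IsPolicy π₂) (s : S) : |gfun r π₁ π₂ s| ≤ 1 := by
  rw [gfun_eq_sum_mul_sum]
  exact (hπ₁.isProbVec s).abs_sum_mul_le fun a₁ =>
    (hπ₂.isProbVec s).abs_sum_mul_le fun a₂ => hr s a₁ a₂

theorem abs_gfun_sub_gfun_le [Fintype S] [Nonempty S] {π₁ π₁' : S → A₁ → ℝ}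
    {π₂ π₂' : S → A₂ → ℝ} (hπ₂ : IsPolicy π₂) (hπ₁' : IsPolicy π₁') (s : S) :
    |gfun r π₁ π₂ s - gfun r π₁' π₂' s| ≤ pdist π₁ π₁' + pdist π₂ π₂' := by
  have hleft : |gfun r π₁ π₂ s - gfun r π₁' π₂ s| ≤ pdist π₁ π₁' := by
    rw [gfun_sub_gfun_left]
    refine (abs_sum_mul_le _ _ fun a₁ =>
      (hπ₂.isProbVec s).abs_sum_mul_le fun a₂ => hr s a₁ a₂).trans ?_
    rw [mul_one]; exact sum_abs_sub_le_pdist π₁ π₁' s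
  have hright : |gfun r π₁' π₂ s - gfun r π₁' π₂' s| ≤ pdist π₂ π₂' := by
    rw [gfun_sub_gfun_right]
    refine (hπ₁'.isProbVec s).abs_sum_mul_le fun a₁ =>
      (abs_sum_mul_le _ _ fun a₂ => hr s a₁ a₂).trans ?_
    rw [mul_one]; exact sum_abs_sub_le_pdist π₂ π₂' s
  exact (abs_sub_le _ _ _).trans (add_le_add hleft hright)

end Rewards

theorem kernel_apply_eq_gfun {S A₁ A₂ : Type*} [Fintype A₁] [Fintype A₂]
    (P : S → A₁ → A₂ → S → ℝ) (π₁ : S → A₁ → ℝ) (π₂ : S → A₂ → ℝ) (s s' : S) :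
    kernel P π₁ π₂ s s' = gfun (fun t a₁ a₂ => P t a₁ a₂ s') π₁ π₂ s :=
  rfl

theorem kdist_kernel_left_le {S A₁ A₂ : Type*} [Fintype S] [Nonempty S] [Fintype A₁]
    [Fintype A₂] {P : S → A₁ → A₂ → S → ℝ} (hP : ∀ s a₁ a₂, IsProbVec (P s a₁ a₂))
    (π₁ π₁' : S → A₁ → ℝ) {π₂ : S → A₂ → ℝ} (hπ₂ : IsPolicy π₂) :
    kdist (kernel P π₁ π₂) (kernel P π₁' π₂) ≤ pdist π₁ π₁' :=
  fmax_le fun s => by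
    have hrow : ∀ a₁, IsProbVec (fun s' => ∑ a₂, π₂ s a₂ * P s a₁ a₂ s') :=
      fun a₁ => (hπ₂.isProbVec s).mixture fun a₂ => hP s a₁ a₂
    simp only [kernel_apply_eq_gfun, gfun_sub_gfun_left]
    refine (sum_abs_sum_mul_le _ _ fun a₁ => (hrow a₁).sum_abs.le).trans ?_
    rw [mul_one]; exact sum_abs_sub_le_pdist π₁ π₁' s

theorem abs_sum_mul_sub_sum_mul_le {S : Type*} [Fintype S] {d d' g g' : S → ℝ}
    (hd' : IsProbVec d') (hg : ∀ s, |g s| ≤ 1) {ε : ℝ} (hgg' : ∀ s, |g s - g' s| ≤ ε) :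
    |∑ s, d s * g s - ∑ s, d' s * g' s| ≤ l1 (fun s => d s - d' s) + ε := by
  have hsplit : ∑ s, d s * g s - ∑ s, d' s * g' s =
      ∑ s, (d s - d' s) * g s + ∑ s, d' s * (g s - g' s) := by
    rw [← sum_sub_distrib, ← sum_add_distrib]
    exact sum_congr rfl fun s _ => by ring
  rw [hsplit]
  refine (abs_add_le _ _).trans (add_le_add ?_ (hd'.abs_sum_mul_le hgg'))
  simpa only [l1, mul_one] using abs_sum_mul_le (fun s => d s - d' s) g hg

theorem stmt_18_general {S A₁ A₂ : Type*} [Fintype S] [Nonempty S]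
    [Fintype A₁] [Fintype A₂]
    (P : S → A₁ → A₂ → S → ℝ) (hP : ∀ s a₁ a₂, IsProbVec (P s a₁ a₂))
    (r : S → A₁ → A₂ → ℝ) (hr : ∀ s a₁ a₂, 0 ≤ r s a₁ a₂ ∧ r s a₁ a₂ ≤ 1)
    (γ : ℝ) (hγ1 : γ < 1)
    (hcontr : ∀ (π₁ : S → A₁ → ℝ) (π₂ : S → A₂ → ℝ), IsPolicy π₁ → IsPolicy π₂ →
      Contractive γ (kernel P π₁ π₂))
    (dstat : (S → A₁ → ℝ) → (S → A₂ → ℝ) → S → ℝ)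
    (hdstat : ∀ (π₁ : S → A₁ → ℝ) (π₂ : S → A₂ → ℝ), IsPolicy π₁ → IsPolicy π₂ →
      IsProbVec (dstat π₁ π₂) ∧ vmul (dstat π₁ π₂) (kernel P π₁ π₂) = dstat π₁ π₂)
    (I₂ : ℝ)
    (hinfl : ∀ (π₁ : S → A₁ → ℝ) (π₂ π₂' : S → A₂ → ℝ),
      IsPolicy π₁ → IsPolicy π₂ → IsPolicy π₂' →
      kdist (kernel P π₁ π₂) (kernel P π₁ π₂') ≤ I₂ * pdist π₂ π₂')
    (π₁ π₁' : S → A₁ → ℝ) (hπ₁ : IsPolicy π₁) (hπ₁' : IsPolicy π₁')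
    (π₂ π₂' : S → A₂ → ℝ) (hπ₂ : IsPolicy π₂) (hπ₂' : IsPolicy π₂') :
    |eta r dstat π₁ π₂ - eta r dstat π₁' π₂'| ≤
      (pdist π₁ π₁' + I₂ * pdist π₂ π₂') / (1 - γ) + pdist π₁ π₁' + pdist π₂ π₂' := by
  obtain ⟨hd, hdK⟩ := hdstat π₁ π₂ hπ₁ hπ₂
  obtain ⟨hd', hd'K'⟩ := hdstat π₁' π₂' hπ₁' hπ₂'
  have hr' : ∀ s a₁ a₂, |r s a₁ a₂| ≤ 1 := fun s a₁ a₂ =>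
    abs_le.2 ⟨by linarith [(hr s a₁ a₂).1], (hr s a₁ a₂).2⟩
  have hK : kdist (kernel P π₁ π₂) (kernel P π₁' π₂') ≤ pdist π₁ π₁' + I₂ * pdist π₂ π₂' :=
    (kdist_triangle _ (kernel P π₁' π₂) _).trans
      (add_le_add (kdist_kernel_left_le hP π₁ π₁' hπ₂) (hinfl π₁' π₂ π₂' hπ₁' hπ₂ hπ₂'))
  have hdist : l1 (fun s => dstat π₁ π₂ s - dstat π₁' π₂' s) ≤
      (pdist π₁ π₁' + I₂ * pdist π₂ π₂') / (1 - γ) :=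
    ((hcontr π₁ π₂ hπ₁ hπ₂).l1_sub_le_of_stationary hγ1 hd hd' hdK hd'K').trans
      (div_le_div_of_nonneg_right hK (by linarith))
  calc |eta r dstat π₁ π₂ - eta r dstat π₁' π₂'|
      ≤ l1 (fun s => dstat π₁ π₂ s - dstat π₁' π₂' s) + (pdist π₁ π₁' + pdist π₂ π₂') :=
        abs_sum_mul_sub_sum_mul_le hd' (abs_gfun_le hr' hπ₁ hπ₂) (abs_gfun_sub_gfun_le hr' hπ₂ hπ₁')
    _ ≤ _ := by linarith

/-- Lipschitz continuity of the average reward in the policy pair,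
|η(π₁,π₂) − η(π₁',π₂')| ≤ (‖π₁−π₁'‖_∞ + I₂‖π₂−π₂'‖_∞)/(1−γ) + ‖π₁−π₁'‖_∞ + ‖π₂−π₂'‖_∞. -/
theorem stmt_18 {S A₁ A₂ : Type*} [Fintype S] [Nonempty S]
    [Fintype A₁] [Nonempty A₁] [Fintype A₂] [Nonempty A₂]
    (P : S → A₁ → A₂ → S → ℝ) (hP : ∀ s a₁ a₂, IsProbVec (P s a₁ a₂))
    (r : S → A₁ → A₂ → ℝ) (hr : ∀ s a₁ a₂, 0 ≤ r s a₁ a₂ ∧ r s a₁ a₂ ≤ 1)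
    (γ : ℝ) (hγ0 : 0 ≤ γ) (hγ1 : γ < 1)
    (hcontr : ∀ (π₁ : S → A₁ → ℝ) (π₂ : S → A₂ → ℝ), IsPolicy π₁ → IsPolicy π₂ →
      Contractive γ (kernel P π₁ π₂))
    (dstat : (S → A₁ → ℝ) → (S → A₂ → ℝ) → S → ℝ)
    (hdstat : ∀ (π₁ : S → A₁ → ℝ) (π₂ : S → A₂ → ℝ), IsPolicy π₁ → IsPolicy π₂ →
      IsProbVec (dstat π₁ π₂) ∧ vmul (dstat π₁ π₂) (kernel P π₁ π₂) = dstat π₁ π₂)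
    (I₂ : ℝ) (hI₂0 : 0 ≤ I₂)
    (hinfl : ∀ (π₁ : S → A₁ → ℝ) (π₂ π₂' : S → A₂ → ℝ),
      IsPolicy π₁ → IsPolicy π₂ → IsPolicy π₂' →
      kdist (kernel P π₁ π₂) (kernel P π₁ π₂') ≤ I₂ * pdist π₂ π₂')
    (π₁ π₁' : S → A₁ → ℝ) (hπ₁ : IsPolicy π₁) (hπ₁' : IsPolicy π₁')
    (π₂ π₂' : S → A₂ → ℝ) (hπ₂ : IsPolicy π₂) (hπ₂' : IsPolicy π₂') :
    |eta r dstat π₁ π₂ - eta r dstat π₁' π₂'| ≤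
      (pdist π₁ π₁' + I₂ * pdist π₂ π₂') / (1 - γ) + pdist π₁ π₁' + pdist π₂ π₂' :=
  stmt_18_general P hP r hr γ hγ1 hcontr dstat hdstat I₂ hinfl π₁ π₁' hπ₁ hπ₁' π₂ π₂' hπ₂ hπ₂'
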